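/- arXiv:2310.13862 — 4 statements merged into one kernel-verified Lean document; each statement's English description precedes it below -/
import Mathlib

section
/- Let q₀ ≥ q₁ ≥ ⋯ ≥ q_{n−1} be a nonincreasing sequence of reals and let m ≥ 1 with n ≥ 2m+1. Among all ways to append m real values to this sequence, the median of the resulting n+m values is minimized when all m appended values are below q_{n−1}, and the minimum achievable median equals (q_{⌊(n+m−1)/2⌋} + q_{⌊(n+m)/2⌋})/2. -/
/-!
Appending `m` values moves every order statistic up by at most `m` places: if `v` is the `k`-th
smallest of the `n + m` values, at least `k + 1` of them are `≤ v` and at most `m` of these are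
appended ones, so the `(k - m)`-th smallest `q`-value is `≤ v`. With `q` nonincreasing that value
is `q (n + m - 1 - k)`, and at the two median positions this gives `q ⌊(n+m)/2⌋` and
`q ⌊(n+m-1)/2⌋`. Appended values below `q (n - 1)` occupy exactly the `m` lowest positions,
so then the bound is attained.
-/

open Finset

/-- Median of a multiset of reals: average of the two middle order statistics
(equal to the middle one for odd cardinality). -/
noncomputable def med (s : Multiset ℝ) : ℝ :=
  ((s.sort (· ≤ ·)).getD ((Multiset.card s - 1) / 2) 0 +
    (s.sort (· ≤ ·)).getD (Multiset.card s / 2) 0) / 2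

/-- `m`-trimmed mean: remove the `m` largest and `m` smallest values and average the rest. -/
noncomputable def trimmedMean (m : ℕ) (s : Multiset ℝ) : ℝ :=
  ((((s.sort (· ≤ ·)).drop m).take (Multiset.card s - 2 * m)).sum) /
    ((Multiset.card s : ℝ) - 2 * m)

/-- The multiset of the first `n` values of `q`. -/
noncomputable def qMs (n : ℕ) (q : ℕ → ℝ) : Multiset ℝ :=
  (Finset.range n).val.map q

namespace List

variable {α : Type*} [LinearOrder α]

lemma getD_le_of_lt_countP {l : List α} (hl : l.Pairwise (· ≤ ·)) {v : α} (d : α) {j : ℕ}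
    (hj : j < l.countP (· ≤ v)) : l.getD j d ≤ v := by
  induction l generalizing j with
  | nil => simp at hj
  | cons a l ih =>
    obtain ⟨ha, hl⟩ := pairwise_cons.mp hl
    by_cases hav : a ≤ v
    · cases j with
      | zero => simpa using hav
      | succ j => simpa using ih hl (by simpa [countP_cons, hav] using hj)
    · have hnone : (a :: l).countP (· ≤ v) = 0 := by
        refine countP_eq_zero.mpr fun x hx hxv => hav ?_
        rcases mem_cons.mp hx with rfl | hx
        · simpa using hxv
        · exact (ha x hx).trans (by simpa using hxv)
      omega

lemma lt_countP_le_getD {l : List α} (hl : l.Pairwise (· ≤ ·)) (d : α) {k : ℕ}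
    (hk : k < l.length) : k < l.countP (· ≤ l.getD k d) := by
  have hprefix : (l.take (k + 1)).countP (· ≤ l.getD k d) = k + 1 := by
    rw [countP_eq_length.mpr, length_take]
    · omega
    intro a ha
    obtain ⟨i, hi, rfl⟩ := getElem_of_mem ha
    rw [length_take] at hi
    rw [getElem_take, getD_eq_getElem l d hk, decide_eq_true_eq]
    rcases (show i < k ∨ i = k by omega) with hik | rfl
    · exact pairwise_iff_getElem.mp hl i k _ hk hik
    · exact le_rfl
  have := (take_sublist (k + 1) l).countP_le (p := (· ≤ l.getD k d))
  omega

end List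

namespace Multiset

variable {α : Type*} [LinearOrder α]

lemma sort_getD_le_sort_add_getD (s t : Multiset α) (d : α) {k : ℕ} (hk : card t ≤ k)
    (hk' : k < card s + card t) :
    (s.sort (· ≤ ·)).getD (k - card t) d ≤ ((s + t).sort (· ≤ ·)).getD k d := by
  set v := ((s + t).sort (· ≤ ·)).getD k d
  have hall : k < (s + t).countP (· ≤ v) := by
    rw [← sort_eq (s + t) (· ≤ ·), coe_countP]
    exact List.lt_countP_le_getD (pairwise_sort _ _) d (by simpa using hk')
  have ht : t.countP (· ≤ v) ≤ card t := countP_le_card _ t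
  have hs : k - card t < (s.sort (· ≤ ·)).countP (· ≤ v) := by
    rw [← coe_countP, sort_eq]
    rw [countP_add] at hall
    omega
  exact List.getD_le_of_lt_countP (pairwise_sort _ _) d hs

lemma sort_add_of_forall_le (s t : Multiset α) (hts : ∀ x ∈ t, ∀ y ∈ s, x ≤ y) :
    (s + t).sort (· ≤ ·) = t.sort (· ≤ ·) ++ s.sort (· ≤ ·) := by
  refine List.Perm.eq_of_pairwise' (pairwise_sort _ _) ?_ ?_
  · exact List.pairwise_append.mpr ⟨pairwise_sort _ _, pairwise_sort _ _,
      fun x hx y hy => hts x ((mem_sort _).mp hx) y ((mem_sort _).mp hy)⟩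
  · rw [← coe_eq_coe, sort_eq, ← coe_add, sort_eq, sort_eq, add_comm]

end Multiset

lemma qMs_sort {n : ℕ} {q : ℕ → ℝ} (hq : ∀ i j, i ≤ j → j < n → q j ≤ q i) :
    (qMs n q).sort (· ≤ ·) = (List.range n).reverse.map q := by
  refine List.Perm.eq_of_pairwise' (Multiset.pairwise_sort _ _) ?_ ?_
  · rw [List.pairwise_map, List.pairwise_reverse]
    refine List.pairwise_lt_range.imp_of_mem fun ha hb hab => hq _ _ hab.le ?_
    simpa using hb
  · rw [← Multiset.coe_eq_coe, Multiset.sort_eq, qMs, ← Multiset.map_coe,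
      Multiset.coe_reverse]
    rfl

lemma qMs_sort_getD {n : ℕ} {q : ℕ → ℝ} (hq : ∀ i j, i ≤ j → j < n → q j ≤ q i) {j : ℕ}
    (hj : j < n) :
    ((qMs n q).sort (· ≤ ·)).getD j 0 = q (n - 1 - j) := by
  rw [qMs_sort hq, List.getD_eq_getElem _ _ (by simpa using hj)]
  simp

lemma le_sort_qMs_add_getD {n : ℕ} {q : ℕ → ℝ} (hq : ∀ i j, i ≤ j → j < n → q j ≤ q i)
    {t : Multiset ℝ} {k : ℕ} (hk : Multiset.card t ≤ k) (hk' : k < n + Multiset.card t) :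
    q (n + Multiset.card t - 1 - k) ≤ ((qMs n q + t).sort (· ≤ ·)).getD k 0 := by
  have hle := Multiset.sort_getD_le_sort_add_getD (qMs n q) t 0 hk (by simpa [qMs] using hk')
  rwa [qMs_sort_getD hq (by omega), show n - 1 - (k - Multiset.card t) =
    n + Multiset.card t - 1 - k by omega] at hle

lemma sort_qMs_add_getD_of_forall_lt {n : ℕ} {q : ℕ → ℝ}
    (hq : ∀ i j, i ≤ j → j < n → q j ≤ q i) {t : Multiset ℝ} (ht : ∀ x ∈ t, x < q (n - 1))
    {k : ℕ} (hk : Multiset.card t ≤ k) (hk' : k < n + Multiset.card t) :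
    ((qMs n q + t).sort (· ≤ ·)).getD k 0 = q (n + Multiset.card t - 1 - k) := by
  have hts : ∀ x ∈ t, ∀ y ∈ qMs n q, x ≤ y := by
    intro x hx y hy
    obtain ⟨i, hi, rfl⟩ := Multiset.mem_map.mp hy
    exact (ht x hx).le.trans (hq i (n - 1) (by simp at hi; omega) (by simp at hi; omega))
  rw [Multiset.sort_add_of_forall_le _ _ hts, List.getD_append_right _ _ _ _ (by simpa using hk),
    Multiset.length_sort, qMs_sort_getD hq (by omega)]
  congr 1
  omega

theorem stmt6_general (n m : ℕ) (hn : 2 * m + 1 ≤ n) (q : ℕ → ℝ)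
    (hq : ∀ i j, i ≤ j → j < n → q j ≤ q i) :
    (∀ t : Multiset ℝ, Multiset.card t = m →
      (q ((n + m - 1) / 2) + q ((n + m) / 2)) / 2 ≤ med (qMs n q + t)) ∧
    (∀ t : Multiset ℝ, Multiset.card t = m → (∀ x ∈ t, x < q (n - 1)) →
      med (qMs n q + t) = (q ((n + m - 1) / 2) + q ((n + m) / 2)) / 2) := by
  have hcard : ∀ t : Multiset ℝ, Multiset.card t = m → Multiset.card (qMs n q + t) = n + m := by
    intro t ht
    simp [qMs, ht]
  have hlow : n + m - 1 - (n + m - 1) / 2 = (n + m) / 2 := by omega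
  have hhigh : n + m - 1 - (n + m) / 2 = (n + m - 1) / 2 := by omega
  refine ⟨fun t ht => ?_, fun t ht hlt => ?_⟩
  · have h₁ := le_sort_qMs_add_getD hq (k := (n + m - 1) / 2) (t := t) (by omega) (by omega)
    have h₂ := le_sort_qMs_add_getD hq (k := (n + m) / 2) (t := t) (by omega) (by omega)
    rw [ht, hlow] at h₁
    rw [ht, hhigh] at h₂
    rw [med, hcard t ht]
    linarith
  · rw [med, hcard t ht, sort_qMs_add_getD_of_forall_lt hq hlt (by omega) (by omega),
      sort_qMs_add_getD_of_forall_lt hq hlt (by omega) (by omega), ht, hlow, hhigh, add_comm]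

theorem stmt6 (n m : ℕ) (hm : 1 ≤ m) (hn : 2 * m + 1 ≤ n) (q : ℕ → ℝ)
    (hq : ∀ i j, i ≤ j → j < n → q j ≤ q i) :
    (∀ t : Multiset ℝ, Multiset.card t = m →
      (q ((n + m - 1) / 2) + q ((n + m) / 2)) / 2 ≤ med (qMs n q + t)) ∧
    (∀ t : Multiset ℝ, Multiset.card t = m → (∀ x ∈ t, x < q (n - 1)) →
      med (qMs n q + t) = (q ((n + m - 1) / 2) + q ((n + m) / 2)) / 2) :=
  stmt6_general n m hn q hq
end

section
/- Let q₀ ≥ ⋯ ≥ q_{n−1} be reals and m ≥ 1 with n ≥ 2m+1. Define the m-trimmed mean of a multiset of N ≥ 2m+1 reals as the average of the N−2m values remaining after removing the m largest and m smallest. Among all ways to append m real values to q₀,…,q_{n−1}, the m-trimmed mean of the resulting n+m values is at most (1/(n−m))·Σ_{h=0}^{n−m−1} q_h, with equality when all m appended values exceed q₀. -/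
open Finset

/-! Sorting `q` together with the appended values `t` keeps the sorted `q` as a sublist, so every
order statistic of the enlarged multiset is at most the order statistic of `q` of the same rank.
The trimmed mean sums the ranks `m, …, n - 1`, which for `q` alone are `q (n-1-m), …, q 0`.
If all of `t` lies above `q 0`, the sorted enlarged list is the sorted `q` followed by the sorted
`t`, and these ranks are attained. -/

namespace List

theorem SortedLE.getElem_le_getElem_of_sublist {α : Type*} [Preorder α] {l₁ l₂ : List α}
    (hl₂ : l₂.SortedLE) (h : l₁ <+ l₂) {i : ℕ} (hi : i < l₁.length) :
    l₂[i]'(hi.trans_le h.length_le) ≤ l₁[i] := by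
  obtain ⟨f, hf⟩ := sublist_iff_exists_orderEmbedding_getElem?_eq.1 h
  obtain ⟨hfi, hfi_eq⟩ := getElem?_eq_some_iff.1 ((hf i).symm.trans (getElem?_eq_getElem hi))
  rw [← hfi_eq]
  exact hl₂.getElem_le_getElem_of_le f.strictMono.le_apply

theorem sum_take_drop_eq_sum_getD {M : Type*} [AddCommMonoid M] (l : List M) (m k : ℕ) :
    ((l.drop m).take k).sum = ∑ i ∈ Finset.range k, l.getD (m + i) 0 := by
  induction k with
  | zero => simp
  | succ k ih =>
    rw [take_add_one, sum_append, ih, Finset.sum_range_succ, getElem?_drop, getD_eq_getElem?_getD]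
    cases l[m + k]? <;> simp

end List

namespace Multiset

variable {α : Type*} [LinearOrder α]

theorem sortedLE_sort (s : Multiset α) : (s.sort (· ≤ ·)).SortedLE :=
  (pairwise_sort s _).sortedLE

theorem getD_sort_le_getD_sort_of_le {s t : Multiset α} (hst : s ≤ t) (d : α) {i : ℕ}
    (hi : i < card s) : (t.sort (· ≤ ·)).getD i d ≤ (s.sort (· ≤ ·)).getD i d := by
  have hsub : (s.sort (· ≤ ·)).Sublist (t.sort (· ≤ ·)) :=
    List.sublist_of_subperm_of_sortedLE (coe_le.1 (by rwa [sort_eq, sort_eq]))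
      (sortedLE_sort s) (sortedLE_sort t)
  have hi' : i < (s.sort (· ≤ ·)).length := by rwa [length_sort]
  rw [List.getD_eq_getElem _ _ hi', List.getD_eq_getElem _ _ (hi'.trans_le hsub.length_le)]
  exact (sortedLE_sort t).getElem_le_getElem_of_sublist hsub hi'

theorem sort_add_eq_append {s t : Multiset α} (h : ∀ a ∈ s, ∀ b ∈ t, a ≤ b) :
    (s + t).sort (· ≤ ·) = s.sort (· ≤ ·) ++ t.sort (· ≤ ·) := by
  have hperm : ((s + t).sort (· ≤ ·)).Perm (s.sort (· ≤ ·) ++ t.sort (· ≤ ·)) :=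
    coe_eq_coe.1 (by rw [sort_eq, ← coe_add, sort_eq, sort_eq])
  refine hperm.eq_of_sortedLE (sortedLE_sort _) (List.Pairwise.sortedLE ?_)
  refine List.pairwise_append.2 ⟨pairwise_sort s _, pairwise_sort t _, ?_⟩
  simpa only [mem_sort] using h

theorem sort_coe_eq_reverse {l : List α} (hl : l.SortedGE) :
    (l : Multiset α).sort (· ≤ ·) = l.reverse :=
  List.Perm.eq_of_sortedLE (sortedLE_sort _) (List.sortedLE_reverse.2 hl)
    ((coe_eq_coe.1 (sort_eq _ _)).trans (List.reverse_perm l).symm)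

end Multiset

theorem trimmedMean_add_eq {s t : Multiset ℝ} {n m : ℕ} (hs : Multiset.card s = n)
    (ht : Multiset.card t = m) :
    trimmedMean m (s + t) =
      (∑ i ∈ range (n - m), ((s + t).sort (· ≤ ·)).getD (m + i) 0) / ((n : ℝ) - m) := by
  have hcard : Multiset.card (s + t) = n + m := by rw [Multiset.card_add, hs, ht]
  rw [trimmedMean, List.sum_take_drop_eq_sum_getD, hcard, show n + m - 2 * m = n - m by omega]
  push_cast
  ring_nf

theorem card_qMs (n : ℕ) (q : ℕ → ℝ) : Multiset.card (qMs n q) = n := by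
  simp [qMs]

theorem sum_getD_sort_qMs {n : ℕ} {q : ℕ → ℝ} (hq : ∀ i j, i ≤ j → j < n → q j ≤ q i)
    (m : ℕ) :
    ∑ i ∈ range (n - m), ((qMs n q).sort (· ≤ ·)).getD (m + i) 0 = ∑ h ∈ range (n - m), q h := by
  have hsorted : ((List.range n).map q).SortedGE := by
    rw [List.sortedGE_iff_getElem_ge_getElem_of_le]
    intro i j hi hj hji
    simp only [List.getElem_map, List.getElem_range]
    exact hq j i hji (by simpa using hi)
  rw [show qMs n q = ((List.range n).map q : List ℝ) from rfl,
    Multiset.sort_coe_eq_reverse hsorted, ← sum_range_reflect]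
  refine sum_congr rfl fun i hi => ?_
  have hi := mem_range.1 hi
  rw [List.getD_reverse _ (by simp; omega), List.getD_eq_getElem _ _ (by simp; omega)]
  simp only [List.getElem_map, List.getElem_range, List.length_map, List.length_range]
  congr 1
  omega

theorem stmt7_general (n m : ℕ) (hn : 2 * m + 1 ≤ n) (q : ℕ → ℝ)
    (hq : ∀ i j, i ≤ j → j < n → q j ≤ q i) :
    (∀ t : Multiset ℝ, Multiset.card t = m →
      trimmedMean m (qMs n q + t) ≤ (∑ h ∈ Finset.range (n - m), q h) / ((n : ℝ) - m)) ∧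
    (∀ t : Multiset ℝ, Multiset.card t = m → (∀ x ∈ t, q 0 < x) →
      trimmedMean m (qMs n q + t) = (∑ h ∈ Finset.range (n - m), q h) / ((n : ℝ) - m)) := by
  have hmn : m ≤ n := by omega
  refine ⟨fun t ht => ?_, fun t ht hqt => ?_⟩
  · rw [trimmedMean_add_eq (card_qMs n q) ht, ← sum_getD_sort_qMs hq m]
    have hden : (0 : ℝ) ≤ n - m := sub_nonneg.2 (Nat.cast_le.2 hmn)
    gcongr with i hi
    exact Multiset.getD_sort_le_getD_sort_of_le (Multiset.le_add_right _ _) 0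
      (by rw [card_qMs]; have := mem_range.1 hi; omega)
  · have hsep : ∀ a ∈ qMs n q, ∀ b ∈ t, a ≤ b := by
      intro a ha b hb
      obtain ⟨j, hj, rfl⟩ := Multiset.mem_map.1 ha
      exact (hq 0 j j.zero_le (Multiset.mem_range.1 hj)).trans (hqt b hb).le
    rw [trimmedMean_add_eq (card_qMs n q) ht, ← sum_getD_sort_qMs hq m,
      Multiset.sort_add_eq_append hsep]
    congr 1
    refine sum_congr rfl fun i hi => List.getD_append _ _ _ _ ?_
    rw [Multiset.length_sort, card_qMs]
    have := mem_range.1 hi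
    omega

theorem stmt7 (n m : ℕ) (hm : 1 ≤ m) (hn : 2 * m + 1 ≤ n) (q : ℕ → ℝ)
    (hq : ∀ i j, i ≤ j → j < n → q j ≤ q i) :
    (∀ t : Multiset ℝ, Multiset.card t = m →
      trimmedMean m (qMs n q + t) ≤ (∑ h ∈ Finset.range (n - m), q h) / ((n : ℝ) - m)) ∧
    (∀ t : Multiset ℝ, Multiset.card t = m → (∀ x ∈ t, q 0 < x) →
      trimmedMean m (qMs n q + t) = (∑ h ∈ Finset.range (n - m), q h) / ((n : ℝ) - m)) :=
  stmt7_general n m hn q hq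
end

section
/- Let q₀ ≥ ⋯ ≥ q_{n−1} be reals, m ≥ 1, n ≥ 2m+1, b > 0, and let w* = ẉ := (1/(n−m))·Σ_{h=m}^{n−1} q_h. If all m appended values equal q_{n−1} − b, then the m-trimmed mean of the resulting n+m values equals w*. -/
open Finset

/-! The appended values lie below every `q j`, so after sorting they come first and are exactly the
`m` smallest values trimmed away; what survives is `q` without its `m` largest values
`q 0, …, q (m - 1)`, i.e. `q m, …, q (n - 1)`. -/

lemma Multiset.sort_replicate_add_of_le {α : Type*} [LinearOrder α] {t : Multiset α} {c : α}
    (hc : ∀ x ∈ t, c ≤ x) (k : ℕ) :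
    (Multiset.replicate k c + t).sort (· ≤ ·) = List.replicate k c ++ t.sort (· ≤ ·) := by
  induction k with
  | zero => simp
  | succ k ih =>
    rw [Multiset.replicate_succ, Multiset.cons_add, Multiset.sort_cons, ih, List.replicate_succ,
      List.cons_append]
    intro x hx
    rcases Multiset.mem_add.1 hx with hx | hx
    · exact (Multiset.eq_of_mem_replicate hx).ge
    · exact hc x hx

lemma trimmedMean_add_replicate_of_le {t : Multiset ℝ} {c : ℝ} (hc : ∀ x ∈ t, c ≤ x) (m : ℕ) :
    trimmedMean m (t + Multiset.replicate m c) =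
      ((t.sort (· ≤ ·)).take (Multiset.card t - m)).sum / ((Multiset.card t : ℝ) - m) := by
  rw [trimmedMean, add_comm, Multiset.sort_replicate_add_of_le hc,
    List.drop_append_of_le_length (by simp), List.drop_replicate, Nat.sub_self,
    List.replicate_zero, List.nil_append, Multiset.card_add, Multiset.card_replicate,
    show m + Multiset.card t - 2 * m = Multiset.card t - m by omega]
  push_cast
  ring_nf

lemma sort_qMs_of_antitoneOn {n : ℕ} {q : ℕ → ℝ} (hq : AntitoneOn q (Set.Iio n)) :
    (qMs n q).sort (· ≤ ·) = ((List.range n).map q).reverse := by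
  have hsorted : ((List.range n).map q).reverse.Pairwise (· ≤ ·) := by
    rw [List.pairwise_reverse, List.pairwise_map]
    exact List.pairwise_lt_range.imp_of_mem fun hi hj hij =>
      hq (List.mem_range.1 hi) (List.mem_range.1 hj) hij.le
  have hcoe : qMs n q = ↑(((List.range n).map q).reverse) := by
    rw [Multiset.coe_reverse, ← Multiset.map_coe, ← Multiset.range, qMs, Finset.range_val]
  rw [hcoe, Multiset.coe_sort, List.mergeSort_eq_self _ hsorted]

lemma sum_take_reverse_map_range {M : Type*} [AddCommMonoid M] (f : ℕ → M) (n k : ℕ) :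
    (((List.range n).map f).reverse.take (n - k)).sum = ∑ i ∈ Ico k n, f i := by
  rcases le_or_gt k n with hkn | hnk
  · rw [List.take_reverse, List.sum_reverse, List.length_map, List.length_range, ← List.map_drop,
      Nat.sub_sub_self hkn, List.range_eq_range', List.drop_range', Nat.Ico_eq_range']
    simp [Finset.sum]
  · simp [Nat.sub_eq_zero_of_le hnk.le, Ico_eq_empty_of_le hnk.le]

theorem stmt13_general (n m : ℕ) (q : ℕ → ℝ)
    (hq : ∀ i j, i ≤ j → j < n → q j ≤ q i) (b wstar : ℝ) (hb : 0 < b)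
    (hw : wstar = (∑ h ∈ Finset.Ico m n, q h) / ((n : ℝ) - m)) :
    trimmedMean m (qMs n q + Multiset.replicate m (q (n - 1) - b)) = wstar := by
  have hanti : AntitoneOn q (Set.Iio n) := fun i _ j hj hij => hq i j hij hj
  have hlow : ∀ x ∈ qMs n q, q (n - 1) - b ≤ x := by
    intro x hx
    obtain ⟨j, hj, rfl⟩ := Multiset.mem_map.1 hx
    replace hj : j < n := Finset.mem_range.1 hj
    linarith [hq j (n - 1) (by omega) (by omega)]
  rw [trimmedMean_add_replicate_of_le hlow, sort_qMs_of_antitoneOn hanti, qMs, Multiset.card_map,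
    Finset.range_val, Multiset.card_range, sum_take_reverse_map_range, hw]

theorem stmt13 (n m : ℕ) (hm : 1 ≤ m) (hn : 2 * m + 1 ≤ n) (q : ℕ → ℝ)
    (hq : ∀ i j, i ≤ j → j < n → q j ≤ q i) (b wstar : ℝ) (hb : 0 < b)
    (hw : wstar = (∑ h ∈ Finset.Ico m n, q h) / ((n : ℝ) - m)) :
    trimmedMean m (qMs n q + Multiset.replicate m (q (n - 1) - b)) = wstar :=
  stmt13_general n m q hq b wstar hb hw
end

section
/- Let q₀ ≥ ⋯ ≥ q_{n−1} be reals, m ≥ 1, n ≥ 2m+1, b > 0. Suppose r with 0 ≤ r ≤ m−1 is the smallest integer ≥ −1 satisfying w* ≥ (1/(n−m))·((r+1)·q_{n−m} + Σ_{h=r+1}^{n−m−1} q_h), and define c = ((n−m)·w* − Σ_{h=r+1}^{n−m−1} q_h)/(r+1). Append m−r−1 copies of q₀ + b and r+1 copies of c. If additionally q_{n−m} ≤ c < q_r, then the m-trimmed mean of the resulting n+m values equals w*. -/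
open Finset

/-!
The appended values split the `n + m` values into three blocks: the `m` smallest values
`q (n - m), …, q (n - 1)`, the middle block of the `r + 1` copies of `c` together with
`q (r + 1), …, q (n - m - 1)`, and the `m` largest values `q 0, …, q r` with the `m - r - 1`
copies of `q 0 + b`. The hypotheses `q (n - m) ≤ c < q r` make every block lie below the next,
so trimming `m` values at each end leaves exactly the middle block, and `c` is chosen so that
this block has mean `w*`.
-/

theorem Multiset.sort_add_of_forall_le_s16 {α : Type*} [LinearOrder α] {s t : Multiset α}
    (h : ∀ x ∈ s, ∀ y ∈ t, x ≤ y) :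
    (s + t).sort (· ≤ ·) = s.sort (· ≤ ·) ++ t.sort (· ≤ ·) := by
  refine List.Perm.eq_of_pairwise' (Multiset.pairwise_sort _ _) ?_ ?_
  · exact List.pairwise_append.2 ⟨Multiset.pairwise_sort _ _, Multiset.pairwise_sort _ _,
      fun x hx y hy => h x (by simpa using hx) y (by simpa using hy)⟩
  · rw [← Multiset.coe_eq_coe, ← Multiset.coe_add, Multiset.sort_eq, Multiset.sort_eq,
      Multiset.sort_eq]

theorem trimmedMean_add_add_of_le {m : ℕ} {lo mid hi : Multiset ℝ} {a b : ℝ}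
    (hlo : Multiset.card lo = m) (hhi : Multiset.card hi = m)
    (hlo_le : ∀ x ∈ lo, x ≤ a) (hmid : ∀ x ∈ mid, a ≤ x ∧ x ≤ b) (hle_hi : ∀ x ∈ hi, b ≤ x)
    (hab : a ≤ b) :
    trimmedMean m (lo + mid + hi) = mid.sum / Multiset.card mid := by
  have hsort : (lo + mid + hi).sort (· ≤ ·) =
      lo.sort (· ≤ ·) ++ mid.sort (· ≤ ·) ++ hi.sort (· ≤ ·) := by
    rw [Multiset.sort_add_of_forall_le_s16, Multiset.sort_add_of_forall_le_s16]
    · exact fun x hx y hy => (hlo_le x hx).trans (hmid y hy).1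
    · intro x hx y hy
      rcases Multiset.mem_add.1 hx with hx | hx
      · exact (hlo_le x hx).trans (hab.trans (hle_hi y hy))
      · exact (hmid x hx).2.trans (hle_hi y hy)
  have hcard : Multiset.card (lo + mid + hi) - 2 * m = Multiset.card mid := by
    simp only [Multiset.card_add]; omega
  rw [trimmedMean, hsort, hcard, List.append_assoc,
    List.drop_left' (by rw [Multiset.length_sort, hlo]),
    List.take_left' (Multiset.length_sort _), ← Multiset.sum_coe, Multiset.sort_eq]
  congr 1
  simp only [Multiset.card_add, Nat.cast_add, hlo, hhi]
  ring

theorem qMs_eq_add {n k l : ℕ} (q : ℕ → ℝ) (hkl : k ≤ l) (hln : l ≤ n) :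
    qMs n q = (Multiset.range k).map q + (Multiset.Ico k l).map q + (Multiset.Ico l n).map q := by
  have hrange (j : ℕ) : Multiset.range j = Multiset.Ico 0 j := by
    rw [← Finset.range_val, Finset.range_eq_Ico]; rfl
  rw [qMs, Finset.range_val, hrange, hrange, ← Multiset.map_add, ← Multiset.map_add,
    Multiset.Ico_add_Ico_eq_Ico (Nat.zero_le k) hkl, Multiset.Ico_add_Ico_eq_Ico (Nat.zero_le l) hln]

theorem sum_div_card_replicate_add_map_Ico {r k : ℕ} (hrk : r + 1 ≤ k) (q : ℕ → ℝ) {c w : ℝ}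
    (hc : c = (k * w - ∑ h ∈ Finset.Ico (r + 1) k, q h) / (r + 1)) :
    (Multiset.replicate (r + 1) c + (Multiset.Ico (r + 1) k).map q).sum /
      Multiset.card (Multiset.replicate (r + 1) c + (Multiset.Ico (r + 1) k).map q) = w := by
  have hcard : Multiset.card (Multiset.Ico (r + 1) k) = k - (r + 1) := Nat.card_Ico _ _
  have hk : (k : ℝ) ≠ 0 := Nat.cast_ne_zero.2 (by omega)
  have hsum : ((Multiset.Ico (r + 1) k).map q).sum = ∑ h ∈ Finset.Ico (r + 1) k, q h := rfl
  rw [Multiset.sum_add, Multiset.sum_replicate, Multiset.card_add, Multiset.card_replicate,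
    Multiset.card_map, hcard, Nat.add_sub_cancel' hrk, nsmul_eq_mul, hsum, hc]
  push_cast
  field_simp
  ring

theorem stmt16_general (n m : ℕ) (hm : 1 ≤ m) (hn : 2 * m + 1 ≤ n) (q : ℕ → ℝ)
    (hq : ∀ i j, i ≤ j → j < n → q j ≤ q i) (b wstar : ℝ) (hb : 0 < b)
    (r : ℕ) (hr2 : r ≤ m - 1)
    (c : ℝ)
    (hc : c = (((n : ℝ) - m) * wstar - ∑ h ∈ Finset.Ico (r + 1) (n - m), q h) / ((r : ℝ) + 1))
    (hc1 : q (n - m) ≤ c) (hc2 : c < q r) :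
    trimmedMean m (qMs n q + (Multiset.replicate (m - r - 1) (q 0 + b) +
      Multiset.replicate (r + 1) c)) = wstar := by
  have hrm : r + 1 ≤ m := by omega
  rw [← Nat.cast_sub (by omega)] at hc
  rw [qMs_eq_add q (by omega : r + 1 ≤ n - m) (Nat.sub_le n m)]
  rw [show ∀ s₁ s₂ s₃ s₄ s₅ : Multiset ℝ, s₁ + s₂ + s₃ + (s₄ + s₅) = s₃ + (s₅ + s₂) + (s₁ + s₄)
    from fun _ _ _ _ _ => by abel]
  refine (trimmedMean_add_add_of_le (a := q (n - m)) (b := q r) ?_ ?_ ?_ ?_ ?_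
    (hq r (n - m) (by omega) (by omega))).trans (sum_div_card_replicate_add_map_Ico (by omega) q hc)
  · rw [Multiset.card_map, show Multiset.card (Multiset.Ico (n - m) n) = _ from Nat.card_Ico _ _]
    omega
  · simp only [Multiset.card_add, Multiset.card_map, Multiset.card_range, Multiset.card_replicate]
    omega
  · simp only [Multiset.mem_map, Multiset.mem_Ico]
    rintro _ ⟨i, ⟨hi, hin⟩, rfl⟩
    exact hq _ _ hi hin
  · simp only [Multiset.mem_add, Multiset.mem_replicate, Multiset.mem_map, Multiset.mem_Ico]
    rintro _ (⟨-, rfl⟩ | ⟨h, ⟨hrh, hh⟩, rfl⟩)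
    · exact ⟨hc1, hc2.le⟩
    · exact ⟨hq _ _ hh.le (by omega), hq _ _ (by omega) (by omega)⟩
  · have hr0 : q r ≤ q 0 := hq _ _ (Nat.zero_le r) (by omega)
    simp only [Multiset.mem_add, Multiset.mem_replicate, Multiset.mem_map, Multiset.mem_range]
    rintro _ (⟨i, hi, rfl⟩ | ⟨-, rfl⟩)
    · exact hq _ _ (by omega) (by omega)
    · linarith

theorem stmt16 (n m : ℕ) (hm : 1 ≤ m) (hn : 2 * m + 1 ≤ n) (q : ℕ → ℝ)
    (hq : ∀ i j, i ≤ j → j < n → q j ≤ q i) (b wstar : ℝ) (hb : 0 < b)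
    (r : ℕ) (hr2 : r ≤ m - 1)
    (hrineq : (1 / ((n : ℝ) - m)) *
      (((r : ℝ) + 1) * q (n - m) + ∑ h ∈ Finset.Ico (r + 1) (n - m), q h) ≤ wstar)
    (hrmin : ∀ r' : ℕ, r' < r →
      ¬ ((1 / ((n : ℝ) - m)) *
        (((r' : ℝ) + 1) * q (n - m) + ∑ h ∈ Finset.Ico (r' + 1) (n - m), q h) ≤ wstar))
    (hneg1 : ¬ ((1 / ((n : ℝ) - m)) * (∑ h ∈ Finset.range (n - m), q h) ≤ wstar))
    (c : ℝ)
    (hc : c = (((n : ℝ) - m) * wstar - ∑ h ∈ Finset.Ico (r + 1) (n - m), q h) / ((r : ℝ) + 1))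
    (hc1 : q (n - m) ≤ c) (hc2 : c < q r) :
    trimmedMean m (qMs n q + (Multiset.replicate (m - r - 1) (q 0 + b) +
      Multiset.replicate (r + 1) c)) = wstar :=
  stmt16_general n m hm hn q hq b wstar hb r hr2 c hc hc1 hc2
end
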